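/- arXiv:1309.5329 — 2 statements merged into one kernel-verified Lean document; each statement's English description precedes it below -/
import Mathlib

section
/- Let M be a simple rank-3 matroid with a modular line L consisting of exactly 4 points, and let x ∈ L. If M \ x has a restriction P isomorphic to the Fano plane F₇ such that E(P) contains three elements of L, then M \ x = P (i.e., E(M) = E(P) ∪ {x}). -/
open Set Matroid

variable {α : Type*}

/-- The rank of a set in a matroid: the supremum of cardinalities of independent subsets. -/
noncomputable def mrk (M : Matroid α) (X : Set α) : ℕ :=
  sSup {n | ∃ I, M.Indep I ∧ I ⊆ X ∧ I.ncard = n}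

/-- A set `X` is modular in `M` if the rank equality holds against every flat. -/
def IsModular (M : Matroid α) (X : Set α) : Prop :=
  ∀ F, M.IsFlat F → mrk M X + mrk M F = mrk M (X ∪ F) + mrk M (X ∩ F)

/-- A matroid is simple if every subset of the ground set with at most two elements
is independent (no loops and no parallel pairs). -/
def MSimple (M : Matroid α) : Prop :=
  ∀ X ⊆ M.E, X.ncard ≤ 2 → M.Indep X

/-- Deletion of a set of elements. -/
def mdelete (M : Matroid α) (D : Set α) : Matroid α := M ↾ (M.E \ D)

/-- Contraction of a set of elements, defined by duality. -/
def mcontract (M : Matroid α) (C : Set α) : Matroid α := (M✶ ↾ (M.E \ C))✶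

/-- `N` is a minor of `M` if it is obtained by a contraction followed by a deletion. -/
def IsMinorOf (N M : Matroid α) : Prop := ∃ C D, N = mdelete (mcontract M C) D

/-- A matroid is connected: it has no 1-separation. -/
def MConnected (M : Matroid α) : Prop :=
  ∀ A B : Set α, A ∪ B = M.E → Disjoint A B → A.Nonempty → B.Nonempty →
    mrk M M.E + 1 ≤ mrk M A + mrk M B

/-- A matroid is 3-connected: connected with no 2-separation. -/
def ThreeConnected (M : Matroid α) : Prop :=
  MConnected M ∧ ∀ A B : Set α, A ∪ B = M.E → Disjoint A B →
    2 ≤ A.ncard → 2 ≤ B.ncard → mrk M M.E + 2 ≤ mrk M A + mrk M B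

/-- `M` is (isomorphic to) the uniform matroid `U_{r,n}`. -/
def IsUnif (M : Matroid α) (r n : ℕ) : Prop :=
  M.E.Finite ∧ M.E.ncard = n ∧ ∀ I ⊆ M.E, (M.Indep I ↔ I.ncard ≤ r)

/-- `M` has a `U_{r,n}`-minor. -/
def HasUnifMinor (M : Matroid α) (r n : ℕ) : Prop :=
  ∃ N, IsMinorOf N M ∧ IsUnif N r n

/-- `M` is (isomorphic to) the Fano matroid `F₇`: a simple rank-3 matroid on 7
elements in which every line has exactly 3 points. -/
def IsFano (M : Matroid α) : Prop :=
  M.E.Finite ∧ M.E.ncard = 7 ∧ MSimple M ∧ mrk M M.E = 3 ∧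
    ∀ L, M.IsFlat L → mrk M L = 2 → L.ncard = 3

/-- `L` is a 4-point line of `M`: a rank-2 flat that is the union of exactly
four rank-1 flats. -/
def FourPointLine (M : Matroid α) (L : Set α) : Prop :=
  M.IsFlat L ∧ mrk M L = 2 ∧
    ∃ f : Fin 4 → Set α, Function.Injective f ∧
      (∀ i, M.IsFlat (f i) ∧ mrk M (f i) = 1) ∧ L = ⋃ i, f i

/-- A circuit: a minimal dependent set. -/
def MCircuit (M : Matroid α) (C : Set α) : Prop :=
  C ⊆ M.E ∧ ¬ M.Indep C ∧ ∀ x ∈ C, M.Indep (C \ {x})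

/-- `M` is (isomorphic to) `P₆`: the 6-element simple rank-3 matroid with exactly
one triangle, whose complement is a triad. -/
def IsP6 (M : Matroid α) : Prop :=
  M.E.Finite ∧ M.E.ncard = 6 ∧ MSimple M ∧ mrk M M.E = 3 ∧
    ∃ T, MCircuit M T ∧ T.ncard = 3 ∧ MCircuit M✶ (M.E \ T) ∧
      ∀ T', MCircuit M T' → T'.ncard = 3 → T' = T

/-- `C` is a circuit-hyperplane of `M`. -/
def CircuitHyperplane (M : Matroid α) (C : Set α) : Prop :=
  MCircuit M C ∧ M.IsFlat C ∧ mrk M C + 1 = mrk M M.E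

/-- `N` is obtained from `M` by relaxing the circuit-hyperplane `C`. -/
def IsRelaxationOf (N M : Matroid α) (C : Set α) : Prop :=
  N.E = M.E ∧ CircuitHyperplane M C ∧ ∀ I ⊆ M.E, (N.Indep I ↔ (M.Indep I ∨ I = C))

/-- `N` is (isomorphic to) the non-Fano matroid `F₇⁻`: a relaxation of a
circuit-hyperplane of the Fano matroid. -/
def IsNonFano (N : Matroid α) : Prop :=
  ∃ (M : Matroid α) (C : Set α), IsFano M ∧ IsRelaxationOf N M C

/-- Isomorphism of matroids on the same ground type. -/
def IsIso (M N : Matroid α) : Prop :=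
  ∃ f : α → α, Set.InjOn f M.E ∧ f '' M.E = N.E ∧
    ∀ I ⊆ M.E, (M.Indep I ↔ N.Indep (f '' I))

/-- `M` is representable over the field `𝔽`. -/
def Representable (M : Matroid α) (𝔽 : Type) [Field 𝔽] : Prop :=
  ∃ (n : ℕ) (φ : α → (Fin n → 𝔽)), ∀ I ⊆ M.E,
    (M.Indep I ↔ LinearIndependent 𝔽 (I.restrict φ))

/-- `L` is a modular 4-point line of `M`. -/
def ModularFourPointLine (M : Matroid α) (L : Set α) : Prop :=
  FourPointLine M L ∧ IsModular M L

section MrkAPI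

variable {M : Matroid α} {X Y I J : Set α}

lemma aux_bddAbove (hE : M.E.Finite) (X : Set α) :
    BddAbove {n | ∃ I, M.Indep I ∧ I ⊆ X ∧ I.ncard = n} := by
  refine ⟨M.E.ncard, fun n hn => ?_⟩
  obtain ⟨I, hI, -, rfl⟩ := hn
  exact Set.ncard_le_ncard hI.subset_ground hE

lemma aux_nonempty (M : Matroid α) (X : Set α) :
    Set.Nonempty {n | ∃ I, M.Indep I ∧ I ⊆ X ∧ I.ncard = n} :=
  ⟨0, ∅, M.empty_indep, empty_subset _, by simp⟩

lemma le_mrk (hE : M.E.Finite) (hI : M.Indep I) (hIX : I ⊆ X) : I.ncard ≤ mrk M X :=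
  le_csSup (aux_bddAbove hE X) ⟨I, hI, hIX, rfl⟩

lemma mrk_le (hE : M.E.Finite) {n : ℕ} (h : ∀ I, M.Indep I → I ⊆ X → I.ncard ≤ n) :
    mrk M X ≤ n :=
  csSup_le (aux_nonempty M X) (fun m hm => by obtain ⟨I, hI, hIX, rfl⟩ := hm; exact h I hI hIX)

lemma exists_mrk_set (hE : M.E.Finite) (X : Set α) :
    ∃ I, M.Indep I ∧ I ⊆ X ∧ I.ncard = mrk M X :=
  Nat.sSup_mem (aux_nonempty M X) (aux_bddAbove hE X)

lemma mrk_mono (hE : M.E.Finite) (h : X ⊆ Y) : mrk M X ≤ mrk M Y :=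
  mrk_le hE (fun I hI hIX => le_mrk hE hI (hIX.trans h))

lemma exists_mrk_basis (hE : M.E.Finite) (X : Set α) :
    ∃ I, M.Indep I ∧ I ⊆ X ∧ I.ncard = mrk M X ∧ X ∩ M.E ⊆ M.closure I := by
  obtain ⟨I, hI, hIX, hc⟩ := exists_mrk_set hE X
  refine ⟨I, hI, hIX, hc, fun e he => ?_⟩
  by_contra hecl
  have heI : e ∉ I := fun h => hecl (M.mem_closure_of_mem' h he.2)
  have hins : M.Indep (insert e I) := (hI.insert_indep_iff_of_notMem heI).2 ⟨he.2, hecl⟩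
  have hcard := le_mrk hE hins (insert_subset he.1 hIX)
  rw [Set.ncard_insert_of_notMem heI (hE.subset hI.subset_ground), hc] at hcard
  omega

lemma indep_closure_card_le (hE : M.E.Finite) (hJ : M.Indep J) (hI : M.Indep I)
    (hIJ : I ⊆ M.closure J) : I.ncard ≤ J.ncard := by
  by_contra hlt
  push_neg at hlt
  have hfinI := hE.subset hI.subset_ground
  have hfinJ := hE.subset hJ.subset_ground
  have henc : J.encard < I.encard := by
    rw [← hfinI.cast_ncard_eq, ← hfinJ.cast_ncard_eq]
    exact_mod_cast hlt
  obtain ⟨e, he, hins⟩ := hJ.augment hI henc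
  have := (hJ.insert_indep_iff_of_notMem he.2).1 hins
  exact this.2 (hIJ he.1)

lemma mrk_inter_ground (M : Matroid α) (X : Set α) : mrk M X = mrk M (X ∩ M.E) := by
  unfold mrk
  congr 1
  ext n
  constructor
  · rintro ⟨I, hI, hIX, rfl⟩; exact ⟨I, hI, subset_inter hIX hI.subset_ground, rfl⟩
  · rintro ⟨I, hI, hIX, rfl⟩; exact ⟨I, hI, hIX.trans inter_subset_left, rfl⟩

lemma mrk_closure (hE : M.E.Finite) (X : Set α) : mrk M (M.closure X) = mrk M X := by
  obtain ⟨J, hJ, hJX, hJc, hJcl⟩ := exists_mrk_basis hE X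
  refine le_antisymm ?_ ?_
  · rw [← hJc]
    refine mrk_le hE fun I hI hIX => indep_closure_card_le hE hJ hI (hIX.trans ?_)
    rw [← M.closure_inter_ground X]
    exact M.closure_subset_closure_of_subset_closure hJcl
  · rw [mrk_inter_ground M X]
    exact mrk_mono hE (M.inter_ground_subset_closure X)

end MrkAPI

section SimpleAPI

variable {M : Matroid α} {X Y I J : Set α}

lemma aux_closure_flat (M : Matroid α) (X : Set α) : M.IsFlat (M.closure X) := by
  rw [closure_def]
  have hne : Nonempty {F // M.IsFlat F ∧ X ∩ M.E ⊆ F} :=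
    ⟨⟨M.E, M.ground_isFlat, inter_subset_right⟩⟩
  have h := IsFlat.iInter (M := M) (Fs := fun F : {F // M.IsFlat F ∧ X ∩ M.E ⊆ F} => F.1)
    (fun F => F.2.1)
  convert h
  rw [sInter_eq_iInter]
  rfl

lemma pair_indep (hs : MSimple M) {a b : α} (ha : a ∈ M.E) (hb : b ∈ M.E) :
    M.Indep {a, b} :=
  hs _ (insert_subset ha (singleton_subset_iff.2 hb))
    ((Set.ncard_insert_le _ _).trans (by simp))

lemma mrk_singleton (hE : M.E.Finite) (hs : MSimple M) {a : α} (ha : a ∈ M.E) :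
    mrk M {a} = 1 := by
  refine le_antisymm (mrk_le hE fun I hI hIX => ?_) ?_
  · exact (Set.ncard_le_ncard hIX (finite_singleton a)).trans_eq (by simp)
  · have h1 := le_mrk hE (hs {a} (singleton_subset_iff.2 ha) (by simp)) (subset_refl _)
    simpa using h1

lemma mrk_pair (hE : M.E.Finite) (hs : MSimple M) {a b : α} (ha : a ∈ M.E) (hb : b ∈ M.E)
    (hab : a ≠ b) : mrk M {a, b} = 2 := by
  refine le_antisymm (mrk_le hE fun I hI hIX => ?_) ?_
  · exact (Set.ncard_le_ncard hIX (by simp)).trans_eq (ncard_pair hab)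
  · have h1 := le_mrk hE (pair_indep hs ha hb) (subset_refl _)
    rwa [ncard_pair hab] at h1

lemma flat_rank_one_eq_singleton (hE : M.E.Finite) (hs : MSimple M) {F : Set α}
    (hF : M.IsFlat F) (h1 : mrk M F = 1) : ∃ a, a ∈ M.E ∧ F = {a} := by
  obtain ⟨I, hI, hIF, hc⟩ := exists_mrk_set hE F
  rw [h1] at hc
  obtain ⟨a, rfl⟩ := Set.ncard_eq_one.1 hc
  have haE : a ∈ M.E := hI.subset_ground rfl
  refine ⟨a, haE, subset_antisymm (fun b hb => ?_) (by simpa using hIF)⟩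
  by_contra hba
  have hba' : a ≠ b := fun h => hba (h ▸ rfl)
  have h2 : ({a, b} : Set α).ncard ≤ mrk M F :=
    le_mrk hE (pair_indep hs haE (hF.subset_ground hb))
      (insert_subset (hIF rfl) (singleton_subset_iff.2 hb))
  rw [ncard_pair hba', h1] at h2
  omega

lemma closure_singleton_simple (hE : M.E.Finite) (hs : MSimple M) {a : α} (ha : a ∈ M.E) :
    M.closure {a} = {a} := by
  obtain ⟨b, hbE, hba⟩ := flat_rank_one_eq_singleton hE hs (aux_closure_flat M {a})
    (by rw [mrk_closure hE, mrk_singleton hE hs ha])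
  have haa : a ∈ M.closure {a} := M.mem_closure_of_mem rfl (singleton_subset_iff.2 ha)
  rw [hba] at haa ⊢
  simp only [mem_singleton_iff] at haa
  rw [← haa]

lemma mrk_flat_insert_point (hE : M.E.Finite) {F : Set α} {y : α} (hF : M.IsFlat F)
    (h2 : mrk M F = 2) (hy : y ∈ M.E) (hyF : y ∉ F) : 3 ≤ mrk M (F ∪ {y}) := by
  obtain ⟨I, hI, hIF, hc, -⟩ := exists_mrk_basis hE F
  have hclI : M.closure I ⊆ F := by
    rw [← hF.closure]; exact M.closure_subset_closure hIF
  have hycl : y ∉ M.closure I := fun h => hyF (hclI h)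
  have hyI : y ∉ I := fun h => hyF (hIF h)
  have hins : M.Indep (insert y I) := (hI.insert_indep_iff_of_notMem hyI).2 ⟨hy, hycl⟩
  have h3 := le_mrk (X := F ∪ {y}) hE hins
    (insert_subset (by simp) (hIF.trans subset_union_left))
  rwa [Set.ncard_insert_of_notMem hyI (hE.subset hI.subset_ground), hc, h2] at h3

end SimpleAPI

section ModPoint

variable {M : Matroid α} {L : Set α}

/-- through an external point `y` and any point `p`, the line meets a modular line `L`
in a unique point `z`, and `p` lies on the line through `y` and `z`. -/
lemma mod_point (hE : M.E.Finite) (hs : MSimple M) (hr : mrk M M.E = 3)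
    (hLf : M.IsFlat L) (hL2 : mrk M L = 2) (hmod : IsModular M L) {y : α} (hy : y ∈ M.E)
    (hyL : y ∉ L) {p : α} (hp : p ∈ M.E) (hpy : p ≠ y) :
    ∃ z ∈ L, p ∈ M.closure {y, z} ∧ ∀ z' ∈ L, p ∈ M.closure {y, z'} → z' = z := by
  set F := M.closure {y, p} with hFdef
  have hyp : ({y, p} : Set α) ⊆ M.E := insert_subset hy (singleton_subset_iff.2 hp)
  have hFflat : M.IsFlat F := aux_closure_flat M _
  have hmodF := hmod F hFflat
  have hF2 : mrk M F = 2 := by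
    rw [hFdef, mrk_closure hE, mrk_pair hE hs hy hp (Ne.symm hpy)]
  have hclY : M.closure {y} = {y} := closure_singleton_simple hE hs hy
  -- rank of union is 3
  have hU3 : mrk M (L ∪ F) = 3 := by
    refine le_antisymm ?_ ?_
    · rw [← hr]
      exact mrk_mono hE (union_subset hLf.subset_ground (M.closure_subset_ground _))
    · refine le_trans (mrk_flat_insert_point hE hLf hL2 hy hyL) (mrk_mono hE ?_)
      refine union_subset_union_right L ?_
      exact singleton_subset_iff.2 (M.mem_closure_of_mem (mem_insert y _) hyp)
  have hI1 : mrk M (L ∩ F) = 1 := by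
    rw [hL2, hF2, hU3] at hmodF
    omega
  obtain ⟨I, hI, hIsub, hc⟩ := exists_mrk_set hE (L ∩ F)
  rw [hI1] at hc
  obtain ⟨z, rfl⟩ := Set.ncard_eq_one.1 hc
  have hzLF : z ∈ L ∩ F := hIsub rfl
  have hzy : z ≠ y := fun h => hyL (h ▸ hzLF.1)
  -- p ∈ closure {y, z} by exchange
  have hzcl : z ∈ M.closure (insert p {y}) \ M.closure {y} := by
    constructor
    · rw [← Set.pair_comm y p]; exact hzLF.2
    · rw [hclY]; simpa using hzy
  have hpz : p ∈ M.closure {y, z} := by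
    have h := Matroid.closure_exchange hzcl
    rw [Set.pair_comm y z]
    exact h.1
  refine ⟨z, hzLF.1, hpz, fun z' hz'L hpz' => ?_⟩
  -- uniqueness
  have hpcl : p ∈ M.closure (insert z' {y}) \ M.closure {y} := by
    constructor
    · rw [← Set.pair_comm y z']; exact hpz'
    · rw [hclY]; simpa using hpy
  have hz'F : z' ∈ F := by
    have h := Matroid.closure_exchange hpcl
    rw [hFdef, Set.pair_comm y p]
    exact h.1
  by_contra hne
  have h2 : ({z, z'} : Set α).ncard ≤ mrk M (L ∩ F) :=
    le_mrk hE (pair_indep hs (hLf.subset_ground hzLF.1) (hLf.subset_ground hz'L))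
      (insert_subset hzLF (singleton_subset_iff.2 ⟨hz'L, hz'F⟩))
  rw [ncard_pair (fun h => hne (h.symm)), hI1] at h2
  omega

end ModPoint

section Lines

variable {P : Matroid α}

lemma line_three (hE : P.E.Finite) (hs : MSimple P)
    (hline : ∀ L, P.IsFlat L → mrk P L = 2 → L.ncard = 3)
    {p q : α} (hp : p ∈ P.E) (hq : q ∈ P.E) (hpq : p ≠ q) :
    (P.closure {p, q}).ncard = 3 :=
  hline _ (aux_closure_flat P _) (by rw [mrk_closure hE, mrk_pair hE hs hp hq hpq])

lemma line_eq_of_mem (hE : P.E.Finite) (hs : MSimple P)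
    (hline : ∀ L, P.IsFlat L → mrk P L = 2 → L.ncard = 3)
    {p q : α} (hp : p ∈ P.E) (hq : q ∈ P.E) (hpq : p ≠ q)
    {w : α} (hw : w ∈ P.closure {p, q}) (hwp : w ≠ p) :
    P.closure {p, w} = P.closure {p, q} := by
  have hpq_sub : ({p, q} : Set α) ⊆ P.E := insert_subset hp (singleton_subset_iff.2 hq)
  have hwE : w ∈ P.E := P.closure_subset_ground _ hw
  have hsub : P.closure {p, w} ⊆ P.closure {p, q} :=
    P.closure_subset_closure_of_subset_closure
      (insert_subset (P.mem_closure_of_mem (mem_insert p _) hpq_sub)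
        (singleton_subset_iff.2 hw))
  refine Set.eq_of_subset_of_ncard_le hsub ?_ (hE.subset (P.closure_subset_ground _))
  rw [line_three hE hs hline hp hq hpq, line_three hE hs hline hp hwE (Ne.symm hwp)]

lemma exists_third (hE : P.E.Finite) (hs : MSimple P)
    (hline : ∀ L, P.IsFlat L → mrk P L = 2 → L.ncard = 3)
    {p q : α} (hp : p ∈ P.E) (hq : q ∈ P.E) (hpq : p ≠ q) :
    ∃ t, t ∉ ({p, q} : Set α) ∧ P.closure {p, q} = {p, q, t} := by
  have hpq_sub : ({p, q} : Set α) ⊆ P.E := insert_subset hp (singleton_subset_iff.2 hq)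
  have h3 := line_three hE hs hline hp hq hpq
  have hsub : ({p, q} : Set α) ⊆ P.closure {p, q} := P.subset_closure _ hpq_sub
  have hfin : (P.closure {p, q}).Finite := hE.subset (P.closure_subset_ground _)
  have hdiff : (P.closure {p, q} \ {p, q}).ncard = 1 := by
    rw [Set.ncard_diff hsub (by simp), h3, ncard_pair hpq]
  obtain ⟨t, ht⟩ := Set.ncard_eq_one.1 hdiff
  have htmem : t ∈ P.closure {p, q} \ {p, q} := ht ▸ rfl
  refine ⟨t, htmem.2, ?_⟩
  have : P.closure {p, q} = {p, q} ∪ (P.closure {p, q} \ {p, q}) :=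
    (union_diff_cancel hsub).symm
  rw [this, ht]
  ext u
  simp only [mem_union, mem_insert_iff, mem_singleton_iff]
  tauto

set_option maxHeartbeats 1000000 in
/-- If a simple rank-3 matroid with a modular 4-point line `L` and `x ∈ L` is such
that `M \ x` has a Fano restriction `P` using three elements of `L`, then `M \ x = P`. -/
theorem stmt5 (M : Matroid α) (hfin : M.E.Finite) (hs : MSimple M)
    (hr : mrk M M.E = 3) (L : Set α) (hL : FourPointLine M L) (hmod : IsModular M L)
    (x : α) (hx : x ∈ L) (P : Matroid α) (hP : Matroid.IsRestriction P (mdelete M {x}))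
    (hPF : IsFano P) (hPL : 3 ≤ (L ∩ P.E).ncard) :
    M.E = P.E ∪ {x} := by
  classical
  obtain ⟨hLflat, hL2, f, hfinj, hfprop, hLunion⟩ := hL
  obtain ⟨hPfin, hP7, hPsimple, hPr3, hPlines⟩ := hPF
  -- basic facts about L
  have hLME : L ⊆ M.E := hLflat.subset_ground
  have hLfin : L.Finite := hfin.subset hLME
  have hxE : x ∈ M.E := hLME hx
  -- L has exactly 4 points
  have hpt : ∀ i, ∃ a, a ∈ M.E ∧ f i = {a} := fun i =>
    flat_rank_one_eq_singleton hfin hs (hfprop i).1 (hfprop i).2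
  choose pt hptE hpteq using hpt
  have hptinj : Function.Injective pt := fun i j h => hfinj (by rw [hpteq, hpteq, h])
  have hLr : L = Set.range pt := by
    rw [hLunion]
    ext u
    simp only [mem_iUnion, mem_range]
    constructor
    · rintro ⟨i, hi⟩; rw [hpteq i] at hi; exact ⟨i, hi.symm⟩
    · rintro ⟨i, rfl⟩; exact ⟨i, by rw [hpteq i]; exact rfl⟩
  have hL4 : L.ncard = 4 := by
    rw [hLr, ← Set.image_univ, Set.ncard_image_of_injOn hptinj.injOn]
    simp [Set.ncard_univ]
  -- the three points of L besides x
  set L₀ : Set α := L \ {x} with hL₀def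
  have hL₀fin : L₀.Finite := hLfin.subset diff_subset
  have hL₀card : L₀.ncard = 3 := by
    rw [hL₀def, Set.ncard_diff_singleton_of_mem hx, hL4]
  have hxL₀ : x ∉ L₀ := fun h => h.2 rfl
  have hL₀L : L₀ ⊆ L := diff_subset
  -- the restriction P
  obtain ⟨R, hRsub, hPeq⟩ := hP
  have hPE' : P.E = R := by rw [hPeq]; rfl
  have hRsub' : R ⊆ M.E \ {x} := hRsub
  have hPEsub : P.E ⊆ M.E \ {x} := by rw [hPE']; exact hRsub'
  have hPME : P.E ⊆ M.E := fun u hu => (hPEsub hu).1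
  have hxP : x ∉ P.E := fun h => (hPEsub h).2 rfl
  have hPind : ∀ I : Set α, P.Indep I ↔ M.Indep I ∧ I ⊆ P.E := by
    intro I
    rw [hPE']
    constructor
    · intro h
      rw [hPeq, Matroid.restrict_indep_iff, mdelete, Matroid.restrict_indep_iff] at h
      exact ⟨h.1.1, h.2⟩
    · intro h
      rw [hPeq, Matroid.restrict_indep_iff, mdelete, Matroid.restrict_indep_iff]
      exact ⟨⟨h.1, h.2.trans hRsub'⟩, h.2⟩
  -- L₀ is contained in P.E
  have hL₀sub : L₀ ⊆ P.E := by
    have h1 : L ∩ P.E ⊆ L₀ := fun u hu =>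
      ⟨hu.1, fun h => hxP (mem_singleton_iff.1 h ▸ hu.2)⟩
    have h2 : L ∩ P.E = L₀ := Set.eq_of_subset_of_ncard_le h1 (by rw [hL₀card]; exact hPL) hL₀fin
    rw [← h2]; exact inter_subset_right
  -- transfer of closure from P to M
  have hMP_cl : ∀ {p q t : α}, p ∈ P.E → q ∈ P.E → t ∈ P.closure {p, q} →
      t ∈ M.closure {p, q} := by
    intro p q t hp hq ht
    have htE : t ∈ P.E := P.closure_subset_ground _ ht
    have hpqP : ({p, q} : Set α) ⊆ P.E := insert_subset hp (singleton_subset_iff.2 hq)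
    have hpqM : ({p, q} : Set α) ⊆ M.E := hpqP.trans hPME
    by_cases htm : t ∈ ({p, q} : Set α)
    · exact M.mem_closure_of_mem htm hpqM
    · have hpairP : P.Indep {p, q} := pair_indep hPsimple hp hq
      have hnotP : ¬ P.Indep (insert t {p, q}) := by
        intro hcon
        exact ((hpairP.insert_indep_iff_of_notMem htm).1 hcon).2 ht
      have hnotM : ¬ M.Indep (insert t {p, q}) := fun hcon =>
        hnotP ((hPind _).2 ⟨hcon, insert_subset htE hpqP⟩)
      have hpairM : M.Indep {p, q} := pair_indep hs (hPME hp) (hPME hq)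
      rw [hpairM.mem_closure_iff_of_notMem htm, Matroid.dep_iff]
      exact ⟨hnotM, insert_subset (hPME htE) hpqM⟩
  -- any two points of L₀ span L₀ in P
  have hL₀line : ∀ u ∈ L₀, ∀ v ∈ L₀, u ≠ v → P.closure {u, v} = L₀ := by
    intro u hu v hv huv
    have huP : u ∈ P.E := hL₀sub hu
    have hvP : v ∈ P.E := hL₀sub hv
    have huvP : ({u, v} : Set α) ⊆ P.E := insert_subset huP (singleton_subset_iff.2 hvP)
    have hsub : L₀ ⊆ P.closure {u, v} := by
      intro w hw
      by_cases hwm : w ∈ ({u, v} : Set α)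
      · exact P.mem_closure_of_mem hwm huvP
      · have hwu : w ≠ u := fun h => hwm (by rw [h]; exact mem_insert u _)
        have hwv : w ≠ v := fun h => hwm (by rw [h]; exact mem_insert_of_mem u rfl)
        have hcard3 : (insert w {u, v} : Set α).ncard = 3 := by
          rw [Set.ncard_insert_of_notMem hwm (by simp), ncard_pair huv]
        have hMdep : ¬ M.Indep (insert w {u, v}) := by
          intro hind
          have h3 := le_mrk hfin hind
            (insert_subset (hL₀L hw) (insert_subset (hL₀L hu) (singleton_subset_iff.2 (hL₀L hv))))
          rw [hcard3, hL2] at h3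
          omega
        have hPdep : ¬ P.Indep (insert w {u, v}) := fun hcon => hMdep ((hPind _).1 hcon).1
        have hpairP : P.Indep {u, v} := pair_indep hPsimple huP hvP
        rw [hpairP.mem_closure_iff_of_notMem hwm, Matroid.dep_iff]
        exact ⟨hPdep, insert_subset (hL₀sub hw) huvP⟩
    exact (Set.eq_of_subset_of_ncard_le hsub
      (by rw [line_three hPfin hPsimple hPlines huP hvP huv, hL₀card])
      (hPfin.subset (P.closure_subset_ground _))).symm
  -- Main inclusion
  refine subset_antisymm ?_ (union_subset hPME (singleton_subset_iff.2 hxE))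
  intro y hyE
  by_contra hymem
  simp only [mem_union, mem_singleton_iff, not_or] at hymem
  obtain ⟨hyP, hyx⟩ := hymem
  have hyL : y ∉ L := by
    intro h
    rcases (em (y = x)) with h' | h'
    · exact hyx h'
    · exact hyP (hL₀sub ⟨h, fun hh => h' (mem_singleton_iff.1 hh)⟩)
  -- projection from y onto L
  have hMOD : ∀ p : α, ∃ z : α, p ∈ P.E →
      z ∈ L ∧ p ∈ M.closure {y, z} ∧ ∀ z' ∈ L, p ∈ M.closure {y, z'} → z' = z := by
    intro p
    by_cases hp : p ∈ P.E
    · obtain ⟨z, h1, h2, h3⟩ := mod_point hfin hs hr hLflat hL2 hmod hyE hyL (hPME hp)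
        (fun h => hyP (h ▸ hp))
      exact ⟨z, fun _ => ⟨h1, h2, h3⟩⟩
    · exact ⟨y, fun h => absurd h hp⟩
  choose z hz using hMOD
  have hzL : ∀ p ∈ P.E, z p ∈ L := fun p hp => (hz p hp).1
  have hzcl : ∀ p ∈ P.E, p ∈ M.closure {y, z p} := fun p hp => (hz p hp).2.1
  have hzuniq : ∀ p ∈ P.E, ∀ w ∈ L, p ∈ M.closure {y, w} → w = z p :=
    fun p hp w hw hcl => (hz p hp).2.2 w hw hcl
  -- the four points of P off L₀
  set Q : Set α := P.E \ L₀ with hQdef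
  have hQfin : Q.Finite := hPfin.subset diff_subset
  have hQ4 : Q.ncard = 4 := by
    rw [hQdef, Set.ncard_diff hL₀sub hL₀fin, hP7, hL₀card]
  -- third point of a line of P through two points of Q lies on L₀
  have hT : ∀ p ∈ Q, ∀ q ∈ Q, p ≠ q →
      ∃ t ∈ L₀, t ∈ M.closure {p, q} ∧ P.closure {p, q} = {p, q, t} := by
    intro p hp q hq hpq
    obtain ⟨t, htnm, hteq⟩ := exists_third hPfin hPsimple hPlines hp.1 hq.1 hpq
    suffices htL₀ : t ∈ L₀ by
      refine ⟨t, htL₀, ?_, hteq⟩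
      exact hMP_cl hp.1 hq.1 (hteq ▸ (mem_insert_of_mem p (mem_insert_of_mem q rfl)))
    -- the projective argument: lines through p and points of L₀ cover everything
    have key : ∀ u ∈ L₀, ∃ su, su ∈ P.E ∧ su ≠ p ∧ su ∉ L₀ ∧
        P.closure {p, u} = {p, u, su} := by
      intro u hu
      have hpu : p ≠ u := fun h => hp.2 (h ▸ hu)
      obtain ⟨su, hsnm, hseq⟩ := exists_third hPfin hPsimple hPlines hp.1 (hL₀sub hu) hpu
      have hsmem : su ∈ P.closure {p, u} := hseq ▸ (mem_insert_of_mem p (mem_insert_of_mem u rfl))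
      have hsE : su ∈ P.E := P.closure_subset_ground _ hsmem
      have hsp : su ≠ p := fun h => hsnm (Or.inl h)
      have hsu : su ≠ u := fun h => hsnm (Or.inr (mem_singleton_iff.2 h))
      refine ⟨su, hsE, hsp, ?_, hseq⟩
      intro hsL₀
      have hLeq : P.closure {u, su} = L₀ := hL₀line u hu su hsL₀ (Ne.symm hsu)
      have hsub2 : P.closure {u, su} ⊆ P.closure {p, u} :=
        P.closure_subset_closure_of_subset_closure
          (insert_subset (P.mem_closure_of_mem (mem_insert_of_mem p rfl)
            (insert_subset hp.1 (singleton_subset_iff.2 (hL₀sub hu)))) (singleton_subset_iff.2 hsmem))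
      have hPsub : insert p L₀ ⊆ P.closure {p, u} := by
        refine insert_subset (P.mem_closure_of_mem (mem_insert p _)
          (insert_subset hp.1 (singleton_subset_iff.2 (hL₀sub hu)))) ?_
        rw [← hLeq]; exact hsub2
      have h4 : (insert p L₀).ncard = 4 := by
        rw [Set.ncard_insert_of_notMem hp.2 hL₀fin, hL₀card]
      have h43 : 4 ≤ (P.closure {p, u}).ncard := by
        rw [← h4]
        exact Set.ncard_le_ncard hPsub (hPfin.subset (P.closure_subset_ground _))
      rw [line_three hPfin hPsimple hPlines hp.1 (hL₀sub hu) hpu] at h43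
      omega
    -- L₀ = {a, b, c}
    obtain ⟨a, b, c, hab, hac, hbc, habc⟩ := Set.ncard_eq_three.1 hL₀card
    have haL₀ : a ∈ L₀ := habc ▸ mem_insert a _
    have hbL₀ : b ∈ L₀ := habc ▸ mem_insert_of_mem a (mem_insert b _)
    have hcL₀ : c ∈ L₀ := habc ▸ mem_insert_of_mem a (mem_insert_of_mem b rfl)
    obtain ⟨sa, hsaE, hsap, hsaL₀, hsaeq⟩ := key a haL₀
    obtain ⟨sb, hsbE, hsbp, hsbL₀, hsbeq⟩ := key b hbL₀
    obtain ⟨sc, hscE, hscp, hscL₀, hsceq⟩ := key c hcL₀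
    -- distinctness of the s points
    have hdist : ∀ u v su sv : α, u ∈ L₀ → v ∈ L₀ → u ≠ v → su ∉ L₀ →
        P.closure {p, u} = {p, u, su} → P.closure {p, v} = {p, v, sv} →
        su ≠ p → su ≠ sv := by
      intro u v su sv hu hv huv hsuL₀ hequ heqv hsup hsusv
      have hsu_mem : su ∈ P.closure {p, u} :=
        hequ ▸ (mem_insert_of_mem p (mem_insert_of_mem u rfl))
      have hsv_mem : su ∈ P.closure {p, v} := by
        rw [hsusv] at hsu_mem ⊢
        exact heqv ▸ (mem_insert_of_mem p (mem_insert_of_mem v rfl))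
      have hpu : p ≠ u := fun h => hp.2 (h ▸ hu)
      have hpv : p ≠ v := fun h => hp.2 (h ▸ hv)
      have h1 : P.closure {p, su} = P.closure {p, u} :=
        line_eq_of_mem hPfin hPsimple hPlines hp.1 (hL₀sub hu) hpu hsu_mem hsup
      have h2 : P.closure {p, su} = P.closure {p, v} :=
        line_eq_of_mem hPfin hPsimple hPlines hp.1 (hL₀sub hv) hpv hsv_mem hsup
      have hveq : v ∈ P.closure {p, u} := by
        rw [← h1, h2]
        exact P.mem_closure_of_mem (mem_insert_of_mem p rfl)
          (insert_subset hp.1 (singleton_subset_iff.2 (hL₀sub hv)))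
      rw [hequ] at hveq
      rcases hveq with h | h | h
      · exact hpv h.symm
      · exact huv h.symm
      · exact hsuL₀ (mem_singleton_iff.1 h ▸ hv)
    have hsasb : sa ≠ sb := hdist a b sa sb haL₀ hbL₀ hab hsaL₀ hsaeq hsbeq hsap
    have hsasc : sa ≠ sc := hdist a c sa sc haL₀ hcL₀ hac hsaL₀ hsaeq hsceq hsap
    have hsbsc : sb ≠ sc := hdist b c sb sc hbL₀ hcL₀ hbc hsbL₀ hsbeq hsceq hsbp
    -- the seven points
    have hpa : p ≠ a := fun h => hp.2 (h ▸ haL₀)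
    have hpb : p ≠ b := fun h => hp.2 (h ▸ hbL₀)
    have hpc : p ≠ c := fun h => hp.2 (h ▸ hcL₀)
    set S : Set α := insert p (L₀ ∪ {sa, sb, sc}) with hSdef
    have hSsub : S ⊆ P.E := by
      rw [hSdef]
      refine insert_subset hp.1 (union_subset hL₀sub ?_)
      exact insert_subset hsaE (insert_subset hsbE (singleton_subset_iff.2 hscE))
    have hScard : S.ncard = 7 := by
      have hs3 : ({sa, sb, sc} : Set α).ncard = 3 := by
        rw [Set.ncard_insert_of_notMem (by simp [hsasb, hsasc]) (by simp), ncard_pair hsbsc]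
      have hdisj : Disjoint L₀ {sa, sb, sc} := by
        rw [Set.disjoint_right]
        intro u hu
        rcases hu with h | h | h
        · exact h ▸ hsaL₀
        · exact h ▸ hsbL₀
        · exact (mem_singleton_iff.1 h) ▸ hscL₀
      have hu6 : (L₀ ∪ {sa, sb, sc}).ncard = 6 := by
        rw [Set.ncard_union_eq hdisj hL₀fin (by simp), hL₀card, hs3]
      have hpnm : p ∉ L₀ ∪ {sa, sb, sc} := by
        rintro (h | h | h | h)
        · exact hp.2 h
        · exact hsap h.symm
        · exact hsbp h.symm
        · exact hscp (mem_singleton_iff.1 h).symm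
      rw [hSdef, Set.ncard_insert_of_notMem hpnm (hL₀fin.union (by simp)), hu6]
    have hSE : S = P.E := Set.eq_of_subset_of_ncard_le hSsub (by rw [hScard, hP7]) hPfin
    -- q must be one of sa sb sc
    have hqS : q ∈ S := hSE ▸ hq.1
    have hfind : ∀ u su : α, u ∈ L₀ → su ∉ L₀ → su ≠ p → P.closure {p, u} = {p, u, su} →
        q = su → t ∈ L₀ := by
      intro u su hu hsuL₀ hsup hequ hqsu
      have hpu : p ≠ u := fun h => hp.2 (h ▸ hu)
      have hsu_mem : su ∈ P.closure {p, u} :=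
        hequ ▸ (mem_insert_of_mem p (mem_insert_of_mem u rfl))
      have h1 : P.closure {p, su} = P.closure {p, u} :=
        line_eq_of_mem hPfin hPsimple hPlines hp.1 (hL₀sub hu) hpu hsu_mem hsup
      have humem : u ∈ P.closure {p, q} := by
        rw [hqsu, h1]
        exact P.mem_closure_of_mem (mem_insert_of_mem p rfl)
          (insert_subset hp.1 (singleton_subset_iff.2 (hL₀sub hu)))
      rw [hteq] at humem
      rcases humem with h | h | h
      · exact absurd h.symm hpu
      · exact absurd (h ▸ hu : q ∈ L₀) hq.2
      · exact (mem_singleton_iff.1 h).symm ▸ hu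
    rcases hqS with h | h | h | h | h
    · exact absurd h.symm hpq
    · exact absurd h hq.2
    · exact hfind a sa haL₀ hsaL₀ hsap hsaeq h
    · exact hfind b sb hbL₀ hsbL₀ hsbp hsbeq h
    · exact hfind c sc hcL₀ hscL₀ hscp hsceq (mem_singleton_iff.1 h)
  -- helper facts
  have hytME : ∀ t ∈ L, ({y, t} : Set α) ⊆ M.E :=
    fun t ht => insert_subset hyE (singleton_subset_iff.2 (hLME ht))
  have hB : ∀ {p q t w : α}, p ∈ Q → q ∈ Q → t ∈ L₀ → t ∈ M.closure {p, q} → w ∈ L →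
      p ∈ M.closure {y, w} → q ∈ M.closure {y, w} → w = t := by
    intro p q t w hp hq ht htM hwL hpw hqw
    have h1 : t ∈ M.closure {y, w} :=
      M.closure_subset_closure_of_subset_closure
        (insert_subset hpw (singleton_subset_iff.2 hqw)) htM
    have htPE : t ∈ P.E := hL₀sub ht
    have h2 := hzuniq t htPE w hwL h1
    have h3 := hzuniq t htPE t (hL₀L ht)
      (M.mem_closure_of_mem (mem_insert_of_mem y rfl) (hytME t (hL₀L ht)))
    exact h2.trans h3.symm
  have hC : ∀ {p q t : α}, p ∈ Q → q ∈ Q → p ≠ q → t ∈ L₀ →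
      P.closure {p, q} = {p, q, t} → p ∈ M.closure {y, t} → q ∈ M.closure {y, t} := by
    intro p q t hp hq hpq ht hline hpcl
    have htPE : t ∈ P.E := hL₀sub ht
    have htmem : t ∈ P.closure {p, q} :=
      hline ▸ (mem_insert_of_mem p (mem_insert_of_mem q rfl))
    have htp : t ≠ p := fun h => hp.2 (h ▸ ht)
    have h1 : P.closure {p, t} = P.closure {p, q} :=
      line_eq_of_mem hPfin hPsimple hPlines hp.1 hq.1 hpq htmem htp
    have hqmem : q ∈ P.closure {p, t} := by
      rw [h1]
      exact P.mem_closure_of_mem (mem_insert_of_mem p rfl)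
        (insert_subset hp.1 (singleton_subset_iff.2 hq.1))
    have hqM : q ∈ M.closure {p, t} := hMP_cl hp.1 htPE hqmem
    have hsub : M.closure {p, t} ⊆ M.closure {y, t} :=
      M.closure_subset_closure_of_subset_closure
        (insert_subset hpcl (singleton_subset_iff.2
          (M.mem_closure_of_mem (mem_insert_of_mem y rfl) (hytME t (hL₀L ht)))))
    exact hsub hqM
  have hD : ∀ {p q r t : α}, p ∈ Q → q ∈ Q → r ∈ Q → p ≠ q → p ≠ r → q ≠ r → t ∈ L₀ →
      P.closure {p, q} = {p, q, t} → P.closure {p, r} = {p, r, t} → False := by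
    intro p q r t hp hq hr hpq hpr hqr ht h1 h2
    have htp : t ≠ p := fun h => hp.2 (h ▸ ht)
    have ht1 : t ∈ P.closure {p, q} := h1 ▸ (mem_insert_of_mem p (mem_insert_of_mem q rfl))
    have ht2 : t ∈ P.closure {p, r} := h2 ▸ (mem_insert_of_mem p (mem_insert_of_mem r rfl))
    have e1 : P.closure {p, t} = P.closure {p, q} :=
      line_eq_of_mem hPfin hPsimple hPlines hp.1 hq.1 hpq ht1 htp
    have e2 : P.closure {p, t} = P.closure {p, r} :=
      line_eq_of_mem hPfin hPsimple hPlines hp.1 hr.1 hpr ht2 htp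
    have hrmem : r ∈ P.closure {p, q} := by
      rw [← e1, e2]
      exact P.mem_closure_of_mem (mem_insert_of_mem p rfl)
        (insert_subset hp.1 (singleton_subset_iff.2 hr.1))
    rw [h1] at hrmem
    rcases hrmem with h | h | h
    · exact hpr h.symm
    · exact hqr h.symm
    · exact hr.2 (by rw [mem_singleton_iff.1 h]; exact ht)
  have pairc : ∀ u v : α, ({u, v} : Set α) = {v, u} := fun u v => Set.pair_comm u v
  have tripc : ∀ u v w : α, ({u, v, w} : Set α) = {v, u, w} := fun u v w => Set.insert_comm u v {w}
  have hCz : ∀ {u v t : α}, u ∈ Q → v ∈ Q → u ≠ v → t ∈ L₀ →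
      P.closure {u, v} = {u, v, t} → t = z u → z v = z u := by
    intro u v t hu hv huv ht hline he
    have h1 : v ∈ M.closure {y, t} := hC hu hv huv ht hline (by rw [he]; exact hzcl u hu.1)
    have h2 := hzuniq v hv.1 t (hL₀L ht) h1
    rw [← h2]; exact he
  by_cases hinj : Set.InjOn z Q
  · -- injective case
    have himgsub : z '' Q ⊆ L := by
      rintro u ⟨p, hp, rfl⟩
      exact hzL p hp.1
    have himg : z '' Q = L := Set.eq_of_subset_of_ncard_le himgsub
      (by rw [Set.ncard_image_of_injOn hinj, hQ4, hL4]) hLfin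
    obtain ⟨s, hsQ, hzs⟩ : ∃ s ∈ Q, z s = x := by
      have hmem : x ∈ z '' Q := by rw [himg]; exact hx
      obtain ⟨s, hsQ, hzs⟩ := hmem
      exact ⟨s, hsQ, hzs⟩
    have hR3card : (Q \ {s}).ncard = 3 := by
      rw [Set.ncard_diff_singleton_of_mem hsQ, hQ4]
    obtain ⟨p, q, r, hpq, hpr, hqr, hR3⟩ := Set.ncard_eq_three.1 hR3card
    have hpR : p ∈ Q \ {s} := by rw [hR3]; exact mem_insert p _
    have hqR : q ∈ Q \ {s} := by rw [hR3]; exact mem_insert_of_mem p (mem_insert q _)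
    have hrR : r ∈ Q \ {s} := by rw [hR3]; exact mem_insert_of_mem p (mem_insert_of_mem q rfl)
    have hpQ := hpR.1
    have hqQ := hqR.1
    have hrQ := hrR.1
    have hps : p ≠ s := fun h => hpR.2 (mem_singleton_iff.2 h)
    have hqs : q ≠ s := fun h => hqR.2 (mem_singleton_iff.2 h)
    have hrs : r ≠ s := fun h => hrR.2 (mem_singleton_iff.2 h)
    have hzpq : z p ≠ z q := fun h => hpq (hinj hpQ hqQ h)
    have hzpr : z p ≠ z r := fun h => hpr (hinj hpQ hrQ h)
    have hzqr : z q ≠ z r := fun h => hqr (hinj hqQ hrQ h)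
    have hzpL₀ : z p ∈ L₀ :=
      ⟨hzL p hpQ.1, fun h => hps (hinj hpQ hsQ ((mem_singleton_iff.1 h).trans hzs.symm))⟩
    have hzqL₀ : z q ∈ L₀ :=
      ⟨hzL q hqQ.1, fun h => hqs (hinj hqQ hsQ ((mem_singleton_iff.1 h).trans hzs.symm))⟩
    have hzrL₀ : z r ∈ L₀ :=
      ⟨hzL r hrQ.1, fun h => hrs (hinj hrQ hsQ ((mem_singleton_iff.1 h).trans hzs.symm))⟩
    have hL₀eq : ({z p, z q, z r} : Set α) = L₀ := by
      refine Set.eq_of_subset_of_ncard_le ?_ ?_ hL₀fin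
      · exact insert_subset hzpL₀ (insert_subset hzqL₀ (singleton_subset_iff.2 hzrL₀))
      · rw [hL₀card, Set.ncard_insert_of_notMem (by simp [hzpq, hzpr]) (by simp),
          ncard_pair hzqr]
    obtain ⟨t1, ht1L₀, ht1M, ht1P⟩ := hT p hpQ q hqQ hpq
    obtain ⟨t2, ht2L₀, ht2M, ht2P⟩ := hT p hpQ r hrQ hpr
    obtain ⟨t3, ht3L₀, ht3M, ht3P⟩ := hT p hpQ s hsQ hps
    have ht1zp : t1 ≠ z p := fun h => hzpq (hCz hpQ hqQ hpq ht1L₀ ht1P h).symm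
    have ht1zq : t1 ≠ z q := by
      intro h
      have hline2 : P.closure {q, p} = {q, p, t1} := by rw [pairc q p, tripc q p t1]; exact ht1P
      exact hzpq (hCz hqQ hpQ (Ne.symm hpq) ht1L₀ hline2 h)
    have ht1 : t1 = z r := by
      have hmem : t1 ∈ ({z p, z q, z r} : Set α) := by rw [hL₀eq]; exact ht1L₀
      rcases hmem with h | h | h
      · exact absurd h ht1zp
      · exact absurd h ht1zq
      · exact mem_singleton_iff.1 h
    have ht2zp : t2 ≠ z p := fun h => hzpr (hCz hpQ hrQ hpr ht2L₀ ht2P h).symm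
    have ht2zr : t2 ≠ z r := by
      intro h
      have hline2 : P.closure {r, p} = {r, p, t2} := by rw [pairc r p, tripc r p t2]; exact ht2P
      exact hzpr (hCz hrQ hpQ (Ne.symm hpr) ht2L₀ hline2 h)
    have ht2 : t2 = z q := by
      have hmem : t2 ∈ ({z p, z q, z r} : Set α) := by rw [hL₀eq]; exact ht2L₀
      rcases hmem with h | h | h
      · exact absurd h ht2zp
      · exact h
      · exact absurd (mem_singleton_iff.1 h) ht2zr
    have ht3zp : t3 ≠ z p := by
      intro h
      have hzszp := hCz hpQ hsQ hps ht3L₀ ht3P h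
      rw [hzs] at hzszp
      exact hxL₀ (by rw [hzszp]; exact hzpL₀)
    have ht3t1 : t3 ≠ t1 := fun h =>
      hD hpQ hsQ hqQ hps hpq (Ne.symm hqs) ht3L₀ ht3P (by rw [h]; exact ht1P)
    have ht3t2 : t3 ≠ t2 := fun h =>
      hD hpQ hsQ hrQ hps hpr (Ne.symm hrs) ht3L₀ ht3P (by rw [h]; exact ht2P)
    have hmem : t3 ∈ ({z p, z q, z r} : Set α) := by rw [hL₀eq]; exact ht3L₀
    rcases hmem with h | h | h
    · exact ht3zp h
    · exact ht3t2 (by rw [h, ht2])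
    · exact ht3t1 (by rw [mem_singleton_iff.1 h, ht1])
  · -- non-injective case
    rw [Set.InjOn] at hinj
    push_neg at hinj
    obtain ⟨p, hpQ, q, hqQ, hzpq, hpq⟩ := hinj
    have hpair_sub : ({p, q} : Set α) ⊆ Q := insert_subset hpQ (singleton_subset_iff.2 hqQ)
    have hR2card : (Q \ {p, q}).ncard = 2 := by
      rw [Set.ncard_diff hpair_sub (by simp), hQ4, ncard_pair hpq]
    obtain ⟨r, s, hrs, hR2⟩ := Set.ncard_eq_two.1 hR2card
    have hrR : r ∈ Q \ {p, q} := by rw [hR2]; exact mem_insert r _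
    have hsR : s ∈ Q \ {p, q} := by rw [hR2]; exact mem_insert_of_mem r rfl
    have hrQ := hrR.1
    have hsQ := hsR.1
    have hrp : r ≠ p := fun h => hrR.2 (Or.inl h)
    have hrq : r ≠ q := fun h => hrR.2 (Or.inr (mem_singleton_iff.2 h))
    have hsp : s ≠ p := fun h => hsR.2 (Or.inl h)
    have hsq : s ≠ q := fun h => hsR.2 (Or.inr (mem_singleton_iff.2 h))
    obtain ⟨t, htL₀, htM, htP⟩ := hT p hpQ q hqQ hpq
    have hzpL : z p ∈ L := hzL p hpQ.1
    have hzpt : z p = t := hB hpQ hqQ htL₀ htM hzpL (hzcl p hpQ.1)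
      (by rw [hzpq]; exact hzcl q hqQ.1)
    have hzpL₀ : z p ∈ L₀ := by rw [hzpt]; exact htL₀
    have main : ∀ r', r' ∈ Q → r' ≠ p → r' ≠ q → z r' ≠ x → False := by
      intro r' hr'Q hr'p hr'q hzr'x
      have hzr'L₀ : z r' ∈ L₀ := ⟨hzL r' hr'Q.1, fun h => hzr'x (mem_singleton_iff.1 h)⟩
      have hzr'zp : z r' ≠ z p := by
        intro he
        obtain ⟨t2, ht2L₀, ht2M, ht2P⟩ := hT p hpQ r' hr'Q (Ne.symm hr'p)
        have h2 : z p = t2 := hB hpQ hr'Q ht2L₀ ht2M hzpL (hzcl p hpQ.1)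
          (by rw [← he]; exact hzcl r' hr'Q.1)
        rw [hzpt] at h2
        exact hD hpQ hqQ hr'Q hpq (Ne.symm hr'p) (Ne.symm hr'q) htL₀ htP
          (by rw [h2]; exact ht2P)
      obtain ⟨w2, hw2L₀, hw2M, hw2P⟩ := hT p hpQ r' hr'Q (Ne.symm hr'p)
      obtain ⟨w3, hw3L₀, hw3M, hw3P⟩ := hT q hqQ r' hr'Q (Ne.symm hr'q)
      have hw2zp : w2 ≠ z p := by
        intro he
        have h1 : r' ∈ M.closure {y, w2} :=
          hC hpQ hr'Q (Ne.symm hr'p) hw2L₀ hw2P (by rw [he]; exact hzcl p hpQ.1)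
        have h2 := hzuniq r' hr'Q.1 w2 (hL₀L hw2L₀) h1
        exact hzr'zp (by rw [← h2, he])
      have hw2zr' : w2 ≠ z r' := by
        intro he
        have hline2 : P.closure {r', p} = {r', p, w2} := by
          rw [pairc r' p, tripc r' p w2]; exact hw2P
        have h1 : p ∈ M.closure {y, w2} :=
          hC hr'Q hpQ hr'p hw2L₀ hline2 (by rw [he]; exact hzcl r' hr'Q.1)
        have h2 := hzuniq p hpQ.1 w2 (hL₀L hw2L₀) h1
        exact hzr'zp (by rw [← he, h2])
      have hw3zp : w3 ≠ z p := by
        intro he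
        have h1 : r' ∈ M.closure {y, w3} :=
          hC hqQ hr'Q (Ne.symm hr'q) hw3L₀ hw3P (by rw [he, hzpq]; exact hzcl q hqQ.1)
        have h2 := hzuniq r' hr'Q.1 w3 (hL₀L hw3L₀) h1
        exact hzr'zp (by rw [← h2, he])
      have hw3zr' : w3 ≠ z r' := by
        intro he
        have hline2 : P.closure {r', q} = {r', q, w3} := by
          rw [pairc r' q, tripc r' q w3]; exact hw3P
        have h1 : q ∈ M.closure {y, w3} :=
          hC hr'Q hqQ hr'q hw3L₀ hline2 (by rw [he]; exact hzcl r' hr'Q.1)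
        have h2 := hzuniq q hqQ.1 w3 (hL₀L hw3L₀) h1
        exact hzr'zp (by rw [← he, h2, ← hzpq])
      have hdiffcard : (L₀ \ {z p, z r'}).ncard = 1 := by
        rw [Set.ncard_diff (insert_subset hzpL₀ (singleton_subset_iff.2 hzr'L₀)) (by simp),
          hL₀card, ncard_pair (Ne.symm hzr'zp)]
      obtain ⟨w0, hw0⟩ := Set.ncard_eq_one.1 hdiffcard
      have hw2mem : w2 ∈ L₀ \ {z p, z r'} := ⟨hw2L₀, by simp [hw2zp, hw2zr']⟩
      have hw3mem : w3 ∈ L₀ \ {z p, z r'} := ⟨hw3L₀, by simp [hw3zp, hw3zr']⟩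
      rw [hw0] at hw2mem hw3mem
      have hw23 : w2 = w3 := by
        rw [mem_singleton_iff.1 hw2mem, mem_singleton_iff.1 hw3mem]
      refine hD hr'Q hpQ hqQ hr'p hr'q hpq hw2L₀ ?_ ?_
      · rw [pairc r' p, tripc r' p w2]; exact hw2P
      · rw [pairc r' q, tripc r' q w2, hw23]; exact hw3P
    by_cases hzr : z r = x
    · by_cases hzs : z s = x
      · obtain ⟨t', ht'L₀, ht'M, ht'P⟩ := hT r hrQ s hsQ hrs
        have hxt : x = t' := hB hrQ hsQ ht'L₀ ht'M hx
          (by rw [← hzr]; exact hzcl r hrQ.1) (by rw [← hzs]; exact hzcl s hsQ.1)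
        exact hxL₀ (by rw [hxt]; exact ht'L₀)
      · exact main s hsQ hsp hsq hzs
    · exact main r hrQ hrp hrq hzr
end Lines
end

section
/- Every 4-point line of a ternary matroid is modular. More precisely, if M is a matroid representable over GF(3) and L is a rank-2 flat of M that is the union of exactly 4 rank-1 flats, then for every flat F of M, r(L) + r(F) = r(L ∪ F) + r(L ∩ F). -/
open Set Matroid

variable {α : Type*}

section AuxStmt16

open Submodule Module

variable {M : Matroid α} {I J X F : Set α} {x y : α} {nn : ℕ} {φ : α → Fin nn → ZMod 3}

lemma aux_bdd (M : Matroid α) (hfin : M.E.Finite) (X : Set α) :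
    BddAbove {n | ∃ I, M.Indep I ∧ I ⊆ X ∧ I.ncard = n} := by
  refine ⟨M.E.ncard, ?_⟩
  rintro n ⟨I, hI, -, rfl⟩
  exact Set.ncard_le_ncard hI.subset_ground hfin

lemma aux_le_mrk (hfin : M.E.Finite) (hJ : M.Indep J) (hJX : J ⊆ X) :
    J.ncard ≤ mrk M X :=
  le_csSup (aux_bdd M hfin X) ⟨J, hJ, hJX, rfl⟩

lemma aux_mrk_basis (hfin : M.E.Finite) (hI : M.IsBasis I X) :
    mrk M X = I.ncard := by
  refine le_antisymm (csSup_le ⟨0, ∅, M.empty_indep, empty_subset X, by simp⟩ ?_)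
    (aux_le_mrk hfin hI.indep hI.subset)
  rintro n ⟨J, hJ, hJX, rfl⟩
  obtain ⟨I', hI', hJI'⟩ := hJ.subset_isBasis_of_subset hJX hI.subset_ground
  have hcard : I'.encard = I.encard := hI'.encard_eq_encard hI
  have hI'fin : I'.Finite := hfin.subset hI'.indep.subset_ground
  calc J.ncard ≤ I'.ncard := Set.ncard_le_ncard hJI' hI'fin
    _ = I.ncard := by rw [Set.ncard, Set.ncard, hcard]

lemma aux_indep_injOn
    (hφ : ∀ I ⊆ M.E, (M.Indep I ↔ LinearIndependent (ZMod 3) (I.restrict φ)))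
    (hI : M.Indep I) :
    Set.InjOn φ I ∧ LinearIndependent (ZMod 3) ((↑) : (φ '' I) → (Fin nn → ZMod 3)) := by
  have h : LinearIndependent (ZMod 3) (fun x : I => φ x) := (hφ I hI.subset_ground).mp hI
  have hinj : Set.InjOn φ I := by
    intro a ha b hb hab
    have : (⟨a, ha⟩ : I) = ⟨b, hb⟩ := h.injective hab
    exact congrArg Subtype.val this
  exact ⟨hinj, (linearIndepOn_iff_image hinj).mp h⟩

lemma aux_insert_span
    (hφ : ∀ I ⊆ M.E, (M.Indep I ↔ LinearIndependent (ZMod 3) (I.restrict φ)))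
    (hI : M.Indep I) (hx : x ∈ M.E) (hxI : ¬ M.Indep (insert x I)) :
    φ x ∈ span (ZMod 3) (φ '' I) := by
  by_contra hsp
  obtain ⟨hinj, hli⟩ := aux_indep_injOn hφ hI
  have hxim : φ x ∉ φ '' I := fun h => hsp (subset_span h)
  have hins : LinearIndependent (ZMod 3)
      ((↑) : ↥(insert (φ x) (φ '' I)) → (Fin nn → ZMod 3)) := LinearIndepOn.id_insert hli hsp
  have hinj' : Set.InjOn φ (insert x I) := by
    rintro a (rfl | ha) b (rfl | hb) hab
    · rfl
    · exact absurd ⟨b, hb, hab.symm⟩ hxim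
    · exact absurd ⟨a, ha, hab⟩ hxim
    · exact hinj ha hb hab
  have : LinearIndependent (ZMod 3) ((insert x I).restrict φ) := by
    refine (linearIndepOn_iff_image hinj').mpr ?_
    rw [Set.image_insert_eq]
    exact hins
  exact hxI ((hφ _ (insert_subset hx hI.subset_ground)).mpr this)

lemma aux_span_basis
    (hφ : ∀ I ⊆ M.E, (M.Indep I ↔ LinearIndependent (ZMod 3) (I.restrict φ)))
    (hI : M.IsBasis I X) :
    span (ZMod 3) (φ '' X) = span (ZMod 3) (φ '' I) := by
  refine le_antisymm (span_le.mpr ?_) (span_mono (image_mono hI.subset))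
  rintro _ ⟨x, hx, rfl⟩
  by_cases hxI : x ∈ I
  · exact subset_span ⟨x, hxI, rfl⟩
  · exact aux_insert_span hφ hI.indep (hI.subset_ground hx) (hI.insert_dep ⟨hx, hxI⟩).not_indep

lemma aux_mem_flat
    (hφ : ∀ I ⊆ M.E, (M.Indep I ↔ LinearIndependent (ZMod 3) (I.restrict φ)))
    (hF : M.IsFlat F) (hx : x ∈ M.E) (hxs : φ x ∈ span (ZMod 3) (φ '' F)) : x ∈ F := by
  obtain ⟨I, hI⟩ := M.exists_isBasis F hF.subset_ground
  by_cases hxI : x ∈ I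
  · exact hI.subset hxI
  have hxsp : φ x ∈ span (ZMod 3) (φ '' I) := by rwa [aux_span_basis hφ hI] at hxs
  have hdep : ¬ M.Indep (insert x I) := by
    intro hind
    obtain ⟨hinj, hli⟩ := aux_indep_injOn hφ hind
    have himg : φ x ∉ φ '' I := by
      rintro ⟨y, hy, hxy⟩
      exact hxI ((hinj (mem_insert x I) (mem_insert_of_mem _ hy) hxy.symm) ▸ hy)
    rw [Set.image_insert_eq] at hli
    exact ((linearIndepOn_id_insert himg).mp hli).2 hxsp
  have hcl : x ∈ M.closure I :=
    (hI.indep.mem_closure_iff_of_notMem hxI).mpr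
      ⟨fun h => hdep h, insert_subset hx hI.indep.subset_ground⟩
  rwa [hI.closure_eq_closure, hF.closure] at hcl

lemma aux_pair_helper (hxy : x ≠ y)
    (h : LinearIndependent (ZMod 3) (({x, y} : Set α).restrict φ)) :
    φ y ≠ 0 ∧ ∀ a : ZMod 3, a • φ y ≠ φ x := by
  have hx : x ∈ ({x, y} : Set α) := by simp
  have hy : y ∈ ({x, y} : Set α) := by simp
  have hg : Function.Injective (![⟨x, hx⟩, ⟨y, hy⟩] : Fin 2 → ({x, y} : Set α)) := by
    intro i j hij
    fin_cases i <;> fin_cases j <;> simp_all [Subtype.ext_iff]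
  have h2 := h.comp _ hg
  have he : (({x, y} : Set α).restrict φ) ∘ ![⟨x, hx⟩, ⟨y, hy⟩] = ![φ x, φ y] := by
    funext i; fin_cases i <;> rfl
  rw [he, linearIndependent_fin2] at h2
  simpa using h2

lemma aux_pair_data
    (hφ : ∀ I ⊆ M.E, (M.Indep I ↔ LinearIndependent (ZMod 3) (I.restrict φ)))
    (hxy : x ≠ y) (h : M.Indep {x, y}) :
    (φ y ≠ 0 ∧ ∀ a : ZMod 3, a • φ y ≠ φ x) ∧
    (φ x ≠ 0 ∧ ∀ a : ZMod 3, a • φ x ≠ φ y) := by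
  have h' : M.Indep {y, x} := by rwa [Set.pair_comm]
  exact ⟨aux_pair_helper hxy ((hφ _ h.subset_ground).mp h),
    aux_pair_helper hxy.symm ((hφ _ h'.subset_ground).mp h')⟩

lemma aux_mrk_finrank
    (hφ : ∀ I ⊆ M.E, (M.Indep I ↔ LinearIndependent (ZMod 3) (I.restrict φ)))
    (hfin : M.E.Finite) (hX : X ⊆ M.E) :
    mrk M X = finrank (ZMod 3) (span (ZMod 3) (φ '' X)) := by
  obtain ⟨I, hI⟩ := M.exists_isBasis X hX
  obtain ⟨hinj, hli⟩ := aux_indep_injOn hφ hI.indep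
  have hIfin : I.Finite := hfin.subset hI.indep.subset_ground
  haveI : Fintype (φ '' I) := (hIfin.image φ).fintype
  rw [aux_mrk_basis hfin hI, aux_span_basis hφ hI, finrank_span_set_eq_card hli,
    ← Set.ncard_eq_toFinset_card', Set.ncard_image_of_injOn hinj]

lemma aux_key4 : ∀ (a b a2 b2 a3 b3 : ZMod 3), (¬(a = 0 ∧ b = 0)) → a2 ≠ 0 → b2 ≠ 0 →
    a3 ≠ 0 → b3 ≠ 0 → (¬ ∃ c : ZMod 3, a3 = c * a2 ∧ b3 = c * b2) →
    ∃ c : ZMod 3, c ≠ 0 ∧ ((a = c ∧ b = 0) ∨ (a = 0 ∧ b = c) ∨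
      (a = c * a2 ∧ b = c * b2) ∨ (a = c * a3 ∧ b = c * b3)) := by
  decide

end AuxStmt16

open Submodule Module

/-- Every 4-point line of a ternary matroid is modular. -/
theorem stmt16 (M : Matroid α) (hfin : M.E.Finite)
    (hrep : Representable M (ZMod 3)) (L : Set α) (hL : FourPointLine M L) :
    ∀ F, M.IsFlat F → mrk M L + mrk M F = mrk M (L ∪ F) + mrk M (L ∩ F) := by
  classical
  intro F hF
  obtain ⟨nn, φ, hφ⟩ := hrep
  obtain ⟨hLflat, hLrk, f, hfinj, hf, hLeq⟩ := hL
  have hLE : L ⊆ M.E := hLflat.subset_ground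
  have hFE : F ⊆ M.E := hF.subset_ground
  -- pick a nonloop in each of the four rank-1 flats
  have he : ∀ i : Fin 4, ∃ e, M.IsBasis {e} (f i) := by
    intro i
    obtain ⟨I, hI⟩ := M.exists_isBasis (f i) (hf i).1.subset_ground
    have h1 : I.ncard = 1 := by
      have h := aux_mrk_basis hfin hI
      rw [(hf i).2] at h
      exact h.symm
    obtain ⟨e, rfl⟩ := Set.ncard_eq_one.mp h1
    exact ⟨e, hI⟩
  choose e hbe using he
  have heL : ∀ i, e i ∈ L := fun i => by
    rw [hLeq]; exact mem_iUnion.mpr ⟨i, (hbe i).subset rfl⟩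
  have hcl : ∀ k, f k = M.closure {e k} := fun k => by
    rw [(hbe k).closure_eq_closure, (hf k).1.closure]
  have hne : ∀ i j : Fin 4, i ≠ j → e i ≠ e j ∧ M.Indep {e i, e j} := by
    intro i j hij
    have hne' : e i ≠ e j := by
      intro h
      exact hij (hfinj (by rw [hcl i, hcl j, h]))
    refine ⟨hne', ?_⟩
    by_contra hdep
    have hEe : {e i, e j} ⊆ M.E :=
      Set.pair_subset ((hbe i).indep.subset_ground rfl) ((hbe j).indep.subset_ground rfl)
    have hdep' : M.Dep (insert (e j) {e i}) := by
      rw [show insert (e j) {e i} = ({e i, e j} : Set α) from Set.pair_comm (e j) (e i)]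
      exact ⟨hdep, hEe⟩
    have hjcl : e j ∈ M.closure {e i} :=
      ((hbe i).indep.mem_closure_iff_of_notMem (by simpa using hne'.symm)).mpr hdep'
    rw [← hcl i] at hjcl
    obtain ⟨Jb, hJb, hsubJ⟩ := (hbe j).indep.subset_isBasis_of_subset
      (singleton_subset_iff.mpr hjcl) (hf i).1.subset_ground
    have h1 : Jb.ncard = 1 := by
      have h := (aux_mrk_basis hfin hJb).symm.trans (aux_mrk_basis hfin (hbe i))
      simpa using h
    have hJeq : {e j} = Jb :=
      Set.eq_of_subset_of_ncard_le hsubJ (by simp [h1])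
        (hfin.subset hJb.indep.subset_ground)
    have hjb : M.IsBasis {e j} (f i) := hJeq ▸ hJb
    have : f i = f j := by
      rw [hcl j, hjb.closure_eq_closure, (hf i).1.closure]
    exact hij (hfinj this)
  -- {e 0, e 1} is a basis of L
  have hpairsub : {e 0, e 1} ⊆ L := Set.pair_subset (heL 0) (heL 1)
  obtain ⟨Jb, hJb, hsubJ⟩ := (hne 0 1 (by decide)).2.subset_isBasis_of_subset hpairsub hLE
  have hJ2 : Jb.ncard = 2 := by
    have h := aux_mrk_basis hfin hJb
    rw [hLrk] at h
    exact h.symm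
  have hpeq : {e 0, e 1} = Jb :=
    Set.eq_of_subset_of_ncard_le hsubJ
      (by rw [hJ2, Set.ncard_pair (hne 0 1 (by decide)).1])
      (hfin.subset hJb.indep.subset_ground)
  have hb01 : M.IsBasis {e 0, e 1} L := hpeq ▸ hJb
  have hSL2 : span (ZMod 3) (φ '' L) = span (ZMod 3) {φ (e 0), φ (e 1)} := by
    rw [aux_span_basis hφ hb01, Set.image_pair]
  -- rank computations via finrank
  have hrkL := aux_mrk_finrank hφ hfin hLE
  have hrkF := aux_mrk_finrank hφ hfin hFE
  have hrkU : mrk M (L ∪ F) = finrank (ZMod 3)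
      ↥(span (ZMod 3) (φ '' L) ⊔ span (ZMod 3) (φ '' F)) := by
    rw [aux_mrk_finrank hφ hfin (union_subset hLE hFE), Set.image_union, Submodule.span_union]
  have hrkI : mrk M (L ∩ F) = finrank (ZMod 3) (span (ZMod 3) (φ '' (L ∩ F))) :=
    aux_mrk_finrank hφ hfin (fun x hx => hLE hx.1)
  have hdimL : finrank (ZMod 3) (span (ZMod 3) (φ '' L)) = 2 := by rw [← hrkL, hLrk]
  have hle1 : span (ZMod 3) (φ '' (L ∩ F)) ≤
      span (ZMod 3) (φ '' L) ⊓ span (ZMod 3) (φ '' F) :=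
    le_inf (span_mono (image_mono inter_subset_left))
      (span_mono (image_mono inter_subset_right))
  have hdim := Submodule.finrank_sup_add_finrank_inf_eq
    (span (ZMod 3) (φ '' L)) (span (ZMod 3) (φ '' F))
  have hinf2 : finrank (ZMod 3) ↥(span (ZMod 3) (φ '' L) ⊓ span (ZMod 3) (φ '' F)) ≤ 2 :=
    hdimL ▸ Submodule.finrank_mono inf_le_left
  have hkey : finrank (ZMod 3) ↥(span (ZMod 3) (φ '' L) ⊓ span (ZMod 3) (φ '' F)) ≤
      finrank (ZMod 3) (span (ZMod 3) (φ '' (L ∩ F))) := by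
    rcases Nat.lt_or_ge (finrank (ZMod 3)
        ↥(span (ZMod 3) (φ '' L) ⊓ span (ZMod 3) (φ '' F))) 1 with h0 | h1
    · omega
    by_cases h2 : 2 ≤ finrank (ZMod 3) ↥(span (ZMod 3) (φ '' L) ⊓ span (ZMod 3) (φ '' F))
    · -- the intersection of spans is all of span L, so L ⊆ F
      have heq : span (ZMod 3) (φ '' L) ⊓ span (ZMod 3) (φ '' F) = span (ZMod 3) (φ '' L) :=
        Submodule.eq_of_le_of_finrank_le inf_le_left (by omega)
      have hLF : L ⊆ F := by
        intro x hx
        refine aux_mem_flat hφ hF (hLE hx) ?_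
        have hxL : φ x ∈ span (ZMod 3) (φ '' L) := subset_span (mem_image_of_mem φ hx)
        rw [← heq] at hxL
        exact hxL.2
      rw [inter_eq_self_of_subset_left hLF, heq]
    · -- dim of intersection is 1 : find a common point
      have hne_bot : span (ZMod 3) (φ '' L) ⊓ span (ZMod 3) (φ '' F) ≠ ⊥ := by
        intro hb
        rw [hb, finrank_bot] at h1
        omega
      obtain ⟨v, hv, hv0⟩ := Submodule.exists_mem_ne_zero_of_ne_bot hne_bot
      have hvSL : v ∈ span (ZMod 3) (φ '' L) := hv.1
      have hvSF : v ∈ span (ZMod 3) (φ '' F) := hv.2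
      rw [hSL2] at hvSL
      obtain ⟨a, b, hab⟩ := Submodule.mem_span_pair.mp hvSL
      have he2SL : φ (e 2) ∈ span (ZMod 3) {φ (e 0), φ (e 1)} := by
        rw [← hSL2]; exact subset_span (mem_image_of_mem φ (heL 2))
      have he3SL : φ (e 3) ∈ span (ZMod 3) {φ (e 0), φ (e 1)} := by
        rw [← hSL2]; exact subset_span (mem_image_of_mem φ (heL 3))
      obtain ⟨a2, b2, h2'⟩ := Submodule.mem_span_pair.mp he2SL
      obtain ⟨a3, b3, h3'⟩ := Submodule.mem_span_pair.mp he3SL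
      have hp : ∀ i j : Fin 4, i ≠ j → ∀ c : ZMod 3, c • φ (e j) ≠ φ (e i) := by
        intro i j hij
        exact (aux_pair_data hφ (hne i j hij).1 (hne i j hij).2).1.2
      have ha2 : a2 ≠ 0 := by
        rintro rfl
        exact hp 2 1 (by decide) b2 (by rw [← h2', zero_smul, zero_add])
      have hb2 : b2 ≠ 0 := by
        rintro rfl
        exact hp 2 0 (by decide) a2 (by rw [← h2', zero_smul, add_zero])
      have ha3 : a3 ≠ 0 := by
        rintro rfl
        exact hp 3 1 (by decide) b3 (by rw [← h3', zero_smul, zero_add])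
      have hb3 : b3 ≠ 0 := by
        rintro rfl
        exact hp 3 0 (by decide) a3 (by rw [← h3', zero_smul, add_zero])
      have h23 : ¬ ∃ c : ZMod 3, a3 = c * a2 ∧ b3 = c * b2 := by
        rintro ⟨c, rfl, rfl⟩
        refine hp 3 2 (by decide) c ?_
        rw [← h3', ← h2', smul_add, smul_smul, smul_smul]
      have hab0 : ¬(a = 0 ∧ b = 0) := by
        rintro ⟨rfl, rfl⟩
        apply hv0
        rw [← hab, zero_smul, zero_smul, add_zero]
      obtain ⟨c, hc0, hcase⟩ := aux_key4 a b a2 b2 a3 b3 hab0 ha2 hb2 ha3 hb3 h23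
      have hvi : ∃ i : Fin 4, v = c • φ (e i) := by
        rcases hcase with ⟨rfl, rfl⟩ | ⟨rfl, rfl⟩ | ⟨rfl, rfl⟩ | ⟨rfl, rfl⟩
        · exact ⟨0, by rw [← hab, zero_smul, add_zero]⟩
        · exact ⟨1, by rw [← hab, zero_smul, zero_add]⟩
        · exact ⟨2, by rw [← hab, ← h2', smul_add, smul_smul, smul_smul]⟩
        · exact ⟨3, by rw [← hab, ← h3', smul_add, smul_smul, smul_smul]⟩
      obtain ⟨i, hvi⟩ := hvi
      have hphi : φ (e i) = c⁻¹ • v := by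
        rw [hvi, smul_smul, inv_mul_cancel₀ hc0, one_smul]
      have hiF : e i ∈ F := by
        refine aux_mem_flat hφ hF (hLE (heL i)) ?_
        rw [hphi]
        exact Submodule.smul_mem _ _ hvSF
      have hmem : φ (e i) ∈ span (ZMod 3) (φ '' (L ∩ F)) :=
        subset_span ⟨e i, ⟨heL i, hiF⟩, rfl⟩
      have hne0 : φ (e i) ≠ 0 := by
        rw [hphi]
        exact smul_ne_zero (inv_ne_zero hc0) hv0
      have hpos : 1 ≤ finrank (ZMod 3) (span (ZMod 3) (φ '' (L ∩ F))) := by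
        rw [Nat.succ_le_iff]
        refine Module.finrank_pos_iff.mpr ?_
        exact ⟨⟨φ (e i), hmem⟩, 0, by simp [hne0]⟩
      omega
  have hkey' : finrank (ZMod 3) (span (ZMod 3) (φ '' (L ∩ F))) =
      finrank (ZMod 3) ↥(span (ZMod 3) (φ '' L) ⊓ span (ZMod 3) (φ '' F)) :=
    le_antisymm (Submodule.finrank_mono hle1) hkey
  rw [hrkL, hrkF, hrkU, hrkI, hkey', ← hdim]
end
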